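/- Let L : ℝ^d → ℝ be L-smooth, bounded below by L*, and run SGD with unbiased stochastic gradients of variance at most σ_g², using step size η = min{1/L, α/(σ_g √T)} for some α > 0. Then there is a constant C depending only on L(θ_1) − L*, α, and L such that (1/T) Σ_{t=1}^T E[‖∇L(θ_t)‖²] ≤ C(1/T + σ_g/√T). -/

import Mathlib

/-!
For an `L`-smooth `f` the descent lemma `f (x + v) ≤ f x + ⟪∇f x, v⟫ + L/2 ‖v‖²` bounds one SGD
step. Pulling the `σ(θₜ)`-measurable `∇f(θₜ)` out of the conditional expectation turns
unbiasedness into `E⟪∇f(θₜ), gₜ⟫ = E‖∇f(θₜ)‖²`, hence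
`E‖gₜ‖² = E‖gₜ - ∇f(θₜ)‖² + E‖∇f(θₜ)‖² ≤ E‖∇f(θₜ)‖² + σ²`, and since `ηL ≤ 1`,
`E f(θₜ₊₁) ≤ E f(θₜ) - η/2 E‖∇f(θₜ)‖² + Lη²σ²/2`. Telescoping against `f ≥ L*` bounds the average
by `2Δ/(Tη) + Lησ²` with `Δ = f θ₀ - L*`, and `1/η ≤ L + σ√T/α`, `η ≤ α/(σ√T)` give the rate with
`C = 2ΔL + 2Δ/α + Lα`.
-/

open MeasureTheory ProbabilityTheory
open scoped RealInnerProductSpace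

section LipschitzGradient

variable {E : Type*} [NormedAddCommGroup E] [InnerProductSpace ℝ E] [CompleteSpace E]
  {f : E → ℝ} {L : ℝ}

theorem continuous_gradient_of_lipschitz
    (hLip : ∀ x y, ‖gradient f x - gradient f y‖ ≤ L * ‖x - y‖) : Continuous (gradient f) :=
  (LipschitzWith.of_dist_le' fun x y => by simpa only [dist_eq_norm] using hLip x y).continuous

theorem hasDerivAt_comp_add_smul (hdiff : Differentiable ℝ f) (x v : E) (s : ℝ) :
    HasDerivAt (fun s : ℝ => f (x + s • v)) ⟪gradient f (x + s • v), v⟫ s := by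
  have hline : HasDerivAt (fun s : ℝ => x + s • v) v s := by
    simpa using ((hasDerivAt_id s).smul_const v).const_add x
  simpa only [InnerProductSpace.toDual_apply_apply, Function.comp_def] using
    (hdiff _).hasGradientAt.hasFDerivAt.comp_hasDerivAt s hline

theorem le_add_inner_gradient_add_sq_of_lipschitz (hdiff : Differentiable ℝ f)
    (hLip : ∀ x y, ‖gradient f x - gradient f y‖ ≤ L * ‖x - y‖) (x v : E) :
    f (x + v) ≤ f x + ⟪gradient f x, v⟫ + L / 2 * ‖v‖ ^ 2 := by
  set φ : ℝ → ℝ := fun s => f (x + s • v) - s * ⟪gradient f x, v⟫ - L / 2 * ‖v‖ ^ 2 * s ^ 2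
  have hφ : ∀ s, HasDerivAt φ
      (⟪gradient f (x + s • v), v⟫ - ⟪gradient f x, v⟫ - L * ‖v‖ ^ 2 * s) s := by
    intro s
    refine (((hasDerivAt_comp_add_smul hdiff x v s).sub ((hasDerivAt_id' s).mul_const
      ⟪gradient f x, v⟫)).sub ((hasDerivAt_pow 2 s).const_mul (L / 2 * ‖v‖ ^ 2))).congr_deriv ?_
    push_cast
    ring
  have hφ' : ∀ s ∈ interior (Set.Ici (0 : ℝ)),
      ⟪gradient f (x + s • v), v⟫ - ⟪gradient f x, v⟫ - L * ‖v‖ ^ 2 * s ≤ 0 := by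
    intro s hs
    rw [interior_Ici, Set.mem_Ioi] at hs
    rw [sub_nonpos]
    calc ⟪gradient f (x + s • v), v⟫ - ⟪gradient f x, v⟫
        = ⟪gradient f (x + s • v) - gradient f x, v⟫ := (inner_sub_left _ _ _).symm
      _ ≤ ‖gradient f (x + s • v) - gradient f x‖ * ‖v‖ := real_inner_le_norm _ _
      _ ≤ L * ‖x + s • v - x‖ * ‖v‖ := by gcongr; exact hLip _ _
      _ = L * ‖v‖ ^ 2 * s := by
        rw [add_sub_cancel_left, norm_smul, Real.norm_of_nonneg hs.le]; ring
  have hanti := antitoneOn_of_hasDerivWithinAt_nonpos (convex_Ici 0)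
    (fun s _ => (hφ s).continuousAt.continuousWithinAt)
    (fun s _ => (hφ s).hasDerivWithinAt) hφ'
  have := hanti Set.self_mem_Ici (Set.mem_Ici.mpr zero_le_one) zero_le_one
  simp only [φ, zero_smul, add_zero, one_smul] at this
  linarith

end LipschitzGradient

section ConditionalExpectation

variable {Ω E : Type*} {m m0 : MeasurableSpace Ω} {μ : Measure Ω}
  [NormedAddCommGroup E] [InnerProductSpace ℝ E]

theorem integrable_inner_of_memLp_two {X Y : Ω → E} (hX : MemLp X 2 μ) (hY : MemLp Y 2 μ) :
    Integrable (fun ω => ⟪X ω, Y ω⟫) μ :=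
  memLp_one_iff_integrable.1 ((innerSL ℝ : E →L[ℝ] E →L[ℝ] ℝ).memLp_of_bilin 1 hX hY)

theorem integral_inner_eq_integral_norm_sq_of_condExp_ae_eq [CompleteSpace E] [IsFiniteMeasure μ]
    (hm : m ≤ m0) {X g : Ω → E} (hX : StronglyMeasurable[m] X)
    (hXg : Integrable (fun ω => ⟪X ω, g ω⟫) μ) (hg : Integrable g μ) (hcond : μ[g | m] =ᵐ[μ] X) :
    ∫ ω, ⟪X ω, g ω⟫ ∂μ = ∫ ω, ‖X ω‖ ^ 2 ∂μ := by
  have hpull := condExp_bilin_of_stronglyMeasurable_left (innerSL ℝ : E →L[ℝ] E →L[ℝ] ℝ) hX hXg hg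
  calc ∫ ω, ⟪X ω, g ω⟫ ∂μ = ∫ ω, (μ[fun ω => ⟪X ω, g ω⟫ | m]) ω ∂μ := (integral_condExp hm).symm
    _ = ∫ ω, ‖X ω‖ ^ 2 ∂μ := integral_congr_ae <| by
      filter_upwards [hpull, hcond] with ω hω hω'
      refine hω.trans ?_
      rw [hω', innerSL_apply_apply, real_inner_self_eq_norm_sq]

theorem integral_le_of_condExp_le [IsProbabilityMeasure μ] (hm : m ≤ m0) {h : Ω → ℝ} {c : ℝ}
    (hc : ∀ᵐ ω ∂μ, (μ[h | m]) ω ≤ c) : ∫ ω, h ω ∂μ ≤ c := by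
  rw [← integral_condExp hm]
  simpa using integral_mono_ae integrable_condExp (integrable_const c) hc

theorem integral_norm_sq_eq_add_of_integral_inner_eq {X g : Ω → E} (hX : MemLp X 2 μ)
    (hg : MemLp g 2 μ) (h : ∫ ω, ⟪X ω, g ω⟫ ∂μ = ∫ ω, ‖X ω‖ ^ 2 ∂μ) :
    ∫ ω, ‖g ω‖ ^ 2 ∂μ = ∫ ω, ‖g ω - X ω‖ ^ 2 ∂μ + ∫ ω, ‖X ω‖ ^ 2 ∂μ := by
  have hX2 := hX.integrable_norm_pow two_ne_zero
  have hg2 := hg.integrable_norm_pow two_ne_zero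
  have hXg := (integrable_inner_of_memLp_two hX hg).const_mul 2
  have hpt : ∀ ω, ‖g ω - X ω‖ ^ 2 = ‖g ω‖ ^ 2 - 2 * ⟪X ω, g ω⟫ + ‖X ω‖ ^ 2 := fun ω => by
    rw [norm_sub_sq_real, real_inner_comm]
  simp_rw [hpt]
  have hsub : Integrable (fun ω => ‖g ω‖ ^ 2 - 2 * ⟪X ω, g ω⟫) μ := hg2.sub hXg
  rw [integral_add hsub hX2, integral_sub hg2 hXg, integral_const_mul, h]
  ring

end ConditionalExpectation

section SGDStep

variable {Ω E : Type*} {m m0 : MeasurableSpace Ω} {μ : Measure Ω}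
  [NormedAddCommGroup E] [InnerProductSpace ℝ E] [CompleteSpace E] {f : E → ℝ} {L : ℝ}

theorem memLp_two_gradient_comp [IsFiniteMeasure μ] (hLip : ∀ x y, ‖gradient f x - gradient f y‖ ≤ L * ‖x - y‖)
    {θ : Ω → E} (hθ : MemLp θ 2 μ) : MemLp (fun ω => gradient f (θ ω)) 2 μ := by
  refine ((memLp_const ‖gradient f 0‖).add (hθ.norm.const_mul L)).mono'
    ((continuous_gradient_of_lipschitz hLip).comp_aestronglyMeasurable hθ.1) (ae_of_all _ ?_)
  intro ω
  have := hLip (θ ω) 0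
  rw [sub_zero] at this
  have := norm_sub_norm_le (gradient f (θ ω)) (gradient f 0)
  simp only [Pi.add_apply]
  linarith

theorem integrable_comp_of_memLp_two [IsFiniteMeasure μ] (hdiff : Differentiable ℝ f)
    (hLip : ∀ x y, ‖gradient f x - gradient f y‖ ≤ L * ‖x - y‖) (hL : 0 ≤ L) {Lstar : ℝ}
    (hbelow : ∀ x, Lstar ≤ f x) {θ : Ω → E} (hθ : MemLp θ 2 μ) :
    Integrable (fun ω => f (θ ω)) μ := by
  have hbound : Integrable (fun ω => |f 0| + |Lstar| + ‖gradient f 0‖ * ‖θ ω‖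
      + L / 2 * ‖θ ω‖ ^ 2) μ :=
    ((integrable_const _).add ((hθ.integrable one_le_two).norm.const_mul _)).add
      ((hθ.integrable_norm_pow two_ne_zero).const_mul _)
  refine hbound.mono' (hdiff.continuous.comp_aestronglyMeasurable hθ.1) (ae_of_all _ fun ω => ?_)
  have hupper := le_add_inner_gradient_add_sq_of_lipschitz hdiff hLip 0 (θ ω)
  rw [zero_add] at hupper
  have := real_inner_le_norm (gradient f 0) (θ ω)
  have := hbelow (θ ω)
  have : 0 ≤ ‖gradient f 0‖ * ‖θ ω‖ := by positivity
  have : 0 ≤ L / 2 * ‖θ ω‖ ^ 2 := by positivity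
  rw [Real.norm_eq_abs, abs_le]
  constructor <;> linarith [neg_abs_le Lstar, le_abs_self (f 0), abs_nonneg Lstar,
    abs_nonneg (f 0)]

theorem integral_comp_sub_smul_le [IsFiniteMeasure μ] (hdiff : Differentiable ℝ f)
    (hLip : ∀ x y, ‖gradient f x - gradient f y‖ ≤ L * ‖x - y‖) (hL : 0 ≤ L) {Lstar : ℝ}
    (hbelow : ∀ x, Lstar ≤ f x) {θ g : Ω → E} (hθ : MemLp θ 2 μ) (hg : MemLp g 2 μ)
    {η σ : ℝ} (hη : 0 ≤ η) (hηL : η * L ≤ 1)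
    (hunbiased : ∫ ω, ⟪gradient f (θ ω), g ω⟫ ∂μ = ∫ ω, ‖gradient f (θ ω)‖ ^ 2 ∂μ)
    (hvar : ∫ ω, ‖g ω - gradient f (θ ω)‖ ^ 2 ∂μ ≤ σ ^ 2) :
    ∫ ω, f (θ ω - η • g ω) ∂μ
      ≤ ∫ ω, f (θ ω) ∂μ - η / 2 * ∫ ω, ‖gradient f (θ ω)‖ ^ 2 ∂μ + L * η ^ 2 / 2 * σ ^ 2 := by
  have hX := memLp_two_gradient_comp hLip hθ
  have hfθ := integrable_comp_of_memLp_two hdiff hLip hL hbelow hθ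
  have hinner := (integrable_inner_of_memLp_two hX hg).const_mul η
  have hg2 := (hg.integrable_norm_pow two_ne_zero).const_mul (L / 2 * η ^ 2)
  have hstep : ∀ ω, f (θ ω - η • g ω) ≤ f (θ ω) - η * ⟪gradient f (θ ω), g ω⟫
      + L / 2 * η ^ 2 * ‖g ω‖ ^ 2 := fun ω => by
    have := le_add_inner_gradient_add_sq_of_lipschitz hdiff hLip (θ ω) (-(η • g ω))
    rwa [← sub_eq_add_neg, inner_neg_right, real_inner_smul_right, norm_neg, norm_smul,
      Real.norm_of_nonneg hη, mul_pow, ← sub_eq_add_neg, ← mul_assoc] at this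
  have hsub : Integrable (fun ω => f (θ ω) - η * ⟪gradient f (θ ω), g ω⟫) μ := hfθ.sub hinner
  have hnext : Integrable (fun ω => f (θ ω - η • g ω)) μ :=
    integrable_comp_of_memLp_two hdiff hLip hL hbelow (hθ.sub (hg.const_smul η))
  have hrhs : Integrable (fun ω => f (θ ω) - η * ⟪gradient f (θ ω), g ω⟫
      + L / 2 * η ^ 2 * ‖g ω‖ ^ 2) μ := hsub.add hg2
  have hmono := integral_mono hnext hrhs hstep
  rw [integral_add hsub hg2, integral_sub hfθ hinner, integral_const_mul, integral_const_mul,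
    hunbiased, integral_norm_sq_eq_add_of_integral_inner_eq hX hg hunbiased] at hmono
  have hM : 0 ≤ ∫ ω, ‖gradient f (θ ω)‖ ^ 2 ∂μ := integral_nonneg fun ω => by positivity
  have : L / 2 * η ^ 2 * ∫ ω, ‖g ω - gradient f (θ ω)‖ ^ 2 ∂μ ≤ L / 2 * η ^ 2 * σ ^ 2 := by
    gcongr
  nlinarith [mul_nonneg (mul_nonneg hη (sub_nonneg.2 hηL)) hM]

theorem integral_comp_sub_smul_le_of_condExp [IsProbabilityMeasure μ] (hdiff : Differentiable ℝ f)
    (hLip : ∀ x y, ‖gradient f x - gradient f y‖ ≤ L * ‖x - y‖) (hL : 0 ≤ L) {Lstar : ℝ}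
    (hbelow : ∀ x, Lstar ≤ f x) (hm : m ≤ m0) {θ g : Ω → E} (hθm : StronglyMeasurable[m] θ)
    (hθ : MemLp θ 2 μ) (hg : MemLp g 2 μ) {η σ : ℝ} (hη : 0 ≤ η) (hηL : η * L ≤ 1)
    (hunbiased : μ[g | m] =ᵐ[μ] fun ω => gradient f (θ ω))
    (hvar : ∀ᵐ ω ∂μ, (μ[fun ω' => ‖g ω' - gradient f (θ ω')‖ ^ 2 | m]) ω ≤ σ ^ 2) :
    ∫ ω, f (θ ω - η • g ω) ∂μ
      ≤ ∫ ω, f (θ ω) ∂μ - η / 2 * ∫ ω, ‖gradient f (θ ω)‖ ^ 2 ∂μ + L * η ^ 2 / 2 * σ ^ 2 :=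
  integral_comp_sub_smul_le hdiff hLip hL hbelow hθ hg hη hηL
    (integral_inner_eq_integral_norm_sq_of_condExp_ae_eq hm
      ((continuous_gradient_of_lipschitz hLip).comp_stronglyMeasurable hθm)
      (integrable_inner_of_memLp_two (memLp_two_gradient_comp hLip hθ) hg)
      (hg.integrable one_le_two) hunbiased)
    (integral_le_of_condExp_le hm hvar)

end SGDStep

theorem mul_sum_range_le_sub_add_of_le_sub_add {a b : ℕ → ℝ} {c e : ℝ}
    (h : ∀ t, a (t + 1) ≤ a t - c * b t + e) (T : ℕ) :
    c * ∑ t ∈ Finset.range T, b t ≤ a 0 - a T + T * e := by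
  rw [Finset.mul_sum, ← Finset.sum_range_sub' a T]
  calc ∑ t ∈ Finset.range T, c * b t ≤ ∑ t ∈ Finset.range T, (a t - a (t + 1) + e) :=
        Finset.sum_le_sum fun t _ => by linarith [h t]
    _ = _ := by simp [Finset.sum_add_distrib]

theorem inv_mul_le_of_min_step_size {L σ α Δ T S : ℝ} (hL : 0 < L) (hσ : 0 < σ) (hα : 0 < α)
    (hT : 0 < T) (hΔ : 0 ≤ Δ) (η : ℝ) (hη : η = min (1 / L) (α / (σ * √T)))
    (hS : η / 2 * S ≤ Δ + T * (L * η ^ 2 / 2 * σ ^ 2)) :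
    1 / T * S ≤ (2 * Δ * L + 2 * Δ / α + L * α) * (1 / T + σ / √T) := by
  have hs : 0 < √T := Real.sqrt_pos.2 hT
  have hηpos : 0 < η := hη ▸ lt_min (by positivity) (by positivity)
  have hη_inv : 1 / η ≤ L + σ * √T / α := by
    rcases min_choice (1 / L) (α / (σ * √T)) with h | h <;> rw [hη, h, one_div_div]
    · linarith [show 0 ≤ σ * √T / α by positivity]
    · linarith
  have hη_le : η ≤ α / (σ * √T) := hη ▸ min_le_right _ _
  have hS' : S ≤ 2 * Δ / η + T * (L * σ ^ 2 * η) := by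
    rw [div_add' _ _ _ hηpos.ne', le_div_iff₀ hηpos]
    linarith
  calc 1 / T * S ≤ 1 / T * (2 * Δ / η + T * (L * σ ^ 2 * η)) := by gcongr
    _ = 2 * Δ / T * (1 / η) + L * σ ^ 2 * η := by field_simp
    _ ≤ 2 * Δ / T * (L + σ * √T / α) + L * σ ^ 2 * (α / (σ * √T)) := by gcongr
    _ = 2 * Δ * L * (1 / T) + (2 * Δ / α + L * α) * (σ / √T) := by
        field_simp
        linear_combination 2 * Δ * σ * Real.mul_self_sqrt hT.le
    _ ≤ _ := by
        have : 0 ≤ 2 * Δ * L * (σ / √T) := by positivity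
        have : 0 ≤ (2 * Δ / α + L * α) * (1 / T) := by positivity
        nlinarith

/-- Convergence rate of SGD (Proposition on loss convergence): for an `L`-smooth objective
`f` bounded below by `Lstar` and SGD with unbiased stochastic gradients of conditional
variance at most `σg²` and step size `η = min (1/L) (α/(σg √T))`, there is a constant `C`
(depending only on `f θ₀ − Lstar`, `α` and `L`) such that for every horizon `T ≥ 1` and
every such run of SGD, `(1/T) ∑_{t<T} E[‖∇f(θ t)‖²] ≤ C (1/T + σg/√T)`. -/
theorem sgd_convergence_rate
    {d : ℕ} {Ω : Type*} [MeasureSpace Ω] [IsProbabilityMeasure (ℙ : Measure Ω)]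
    (f : EuclideanSpace ℝ (Fin d) → ℝ) (L Lstar σg α : ℝ)
    (hL : 0 < L) (hσg : 0 < σg) (hα : 0 < α)
    (hdiff : Differentiable ℝ f)
    (hLip : ∀ θ θ' : EuclideanSpace ℝ (Fin d),
      ‖gradient f θ - gradient f θ'‖ ≤ L * ‖θ - θ'‖)
    (hbelow : ∀ θ, Lstar ≤ f θ)
    (θ0 : EuclideanSpace ℝ (Fin d)) :
    ∃ C : ℝ, ∀ (T : ℕ), 0 < T →
      ∀ (θ g : ℕ → Ω → EuclideanSpace ℝ (Fin d)),
        θ 0 = (fun _ => θ0) →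
        (∀ t, Measurable (θ t)) →
        (∀ t, MemLp (g t) 2 ℙ) →
        (∀ t ω, θ (t + 1) ω
          = θ t ω - (min (1 / L) (α / (σg * Real.sqrt T))) • g t ω) →
        (∀ t, (ℙ[g t | MeasurableSpace.comap (θ t) inferInstance]) =ᵐ[ℙ]
          fun ω => gradient f (θ t ω)) →
        (∀ t, ∀ᵐ ω ∂ℙ,
          (ℙ[fun ω' => ‖g t ω' - gradient f (θ t ω')‖ ^ 2 |
              MeasurableSpace.comap (θ t) inferInstance]) ω ≤ σg ^ 2) →
        (1 / (T : ℝ)) * ∑ t ∈ Finset.range T, ∫ ω, ‖gradient f (θ t ω)‖ ^ 2 ∂ℙ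
          ≤ C * (1 / (T : ℝ) + σg / Real.sqrt T) := by
  refine ⟨2 * (f θ0 - Lstar) * L + 2 * (f θ0 - Lstar) / α + L * α, ?_⟩
  intro T hT θ g hθ0 hθmeas hg hstep hunbiased hvar
  set η := min (1 / L) (α / (σg * Real.sqrt T)) with hη
  have hT' : (0 : ℝ) < T := Nat.cast_pos.2 hT
  have hηpos : 0 < η := lt_min (by positivity) (by positivity)
  have hηL : η * L ≤ 1 := (le_div_iff₀ hL).1 (min_le_left _ _)
  have hθ : ∀ t, MemLp (θ t) 2 ℙ := by
    intro t
    induction t with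
    | zero => simpa [hθ0] using memLp_const θ0
    | succ t ih =>
      rw [show θ (t + 1) = θ t - η • g t from funext (hstep t)]
      exact ih.sub ((hg t).const_smul η)
  have hdescent : ∀ t, ∫ ω, f (θ (t + 1) ω) ∂ℙ ≤ ∫ ω, f (θ t ω) ∂ℙ
      - η / 2 * ∫ ω, ‖gradient f (θ t ω)‖ ^ 2 ∂ℙ + L * η ^ 2 / 2 * σg ^ 2 := by
    intro t
    simp_rw [hstep t]
    exact integral_comp_sub_smul_le_of_condExp hdiff hLip hL.le hbelow (hθmeas t).comap_le
      (Measurable.of_comap_le le_rfl).stronglyMeasurable (hθ t) (hg t) hηpos.le hηL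
      (hunbiased t) (hvar t)
  have hlast : Lstar ≤ ∫ ω, f (θ T ω) ∂ℙ := by
    simpa using integral_mono (integrable_const Lstar)
      (integrable_comp_of_memLp_two hdiff hLip hL.le hbelow (hθ T)) fun ω => hbelow (θ T ω)
  have hsum := mul_sum_range_le_sub_add_of_le_sub_add (a := fun t => ∫ ω, f (θ t ω) ∂ℙ)
    (b := fun t => ∫ ω, ‖gradient f (θ t ω)‖ ^ 2 ∂ℙ) hdescent T
  simp only [hθ0, integral_const, smul_eq_mul, probReal_univ, one_mul] at hsum
  exact inv_mul_le_of_min_step_size hL hσg hα hT' (sub_nonneg.2 (hbelow θ0)) η hη (by linarith)
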